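/- Let P be symmetric positive definite and M := Q + KᵀRK symmetric positive definite, with (A+BK)ᵀP(A+BK) ≼ P - M. Define ρ := 1 - λ_min(P^{-1/2} M P^{-1/2}). Then ρ ∈ [0,1), and for all vectors e, ((A+BK)e)ᵀP((A+BK)e) ≤ ρ · eᵀPe. -/

import Mathlib

/-!
By the spectral theorem `S ≽ λ_min • 1`; conjugating with `W = P^{1/2}` turns this into
`M ≽ λ_min • P`, hence `(A+BK)ᵀP(A+BK) ≼ P - M ≼ ρ • P`. Moreover `λ_min > 0` because `S` is
congruent to `M ≻ 0`, and `ρ ≥ 0` because `ρ • P ≽ (A+BK)ᵀP(A+BK) ≽ 0` while `P` has a positive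
diagonal.
-/

open Matrix

section

open scoped ComplexOrder

/-- The square root of a positive semidefinite matrix, as defined in Mathlib (Dec 2024)
as `Matrix.PosSemidef.sqrt` (since removed). -/
noncomputable def Matrix.PosSemidef.sqrt {n 𝕜 : Type*} [Fintype n] [DecidableEq n] [RCLike 𝕜]
    {A : Matrix n n 𝕜} (hA : A.PosSemidef) : Matrix n n 𝕜 :=
  hA.1.eigenvectorUnitary.1 * diagonal ((↑) ∘ (√·) ∘ hA.1.eigenvalues) *
    (star hA.1.eigenvectorUnitary : Matrix n n 𝕜)

end

open scoped MatrixOrder ComplexOrder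

namespace Matrix

variable {n 𝕜 : Type*} [Fintype n] [RCLike 𝕜]

lemma dotProduct_mulVec_transpose_mul_mul {R : Type*} [CommSemiring R] (T P : Matrix n n R)
    (x : n → R) : x ⬝ᵥ ((Tᵀ * P * T) *ᵥ x) = (T *ᵥ x) ⬝ᵥ (P *ᵥ (T *ᵥ x)) := by
  rw [← mulVec_mulVec, ← mulVec_mulVec, dotProduct_mulVec, vecMul_transpose]

lemma dotProduct_mulVec_le_of_le {X Y : Matrix n n 𝕜} (h : X ≤ Y) (x : n → 𝕜) :
    star x ⬝ᵥ (X *ᵥ x) ≤ star x ⬝ᵥ (Y *ᵥ x) := by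
  have := (le_iff.mp h).dotProduct_mulVec_nonneg x
  rwa [sub_mulVec, dotProduct_sub, sub_nonneg] at this

variable [DecidableEq n]

lemma PosSemidef.sqrt_eq_cfcSqrt {A : Matrix n n 𝕜} (hA : A.PosSemidef) :
    hA.sqrt = CFC.sqrt A := by
  rw [CFC.sqrt_eq_real_sqrt A hA.nonneg, cfcₙ_eq_cfc, hA.1.cfc_eq]
  rfl

lemma IsHermitian.algebraMap_iInf_eigenvalues_le {S : Matrix n n 𝕜} (hS : S.IsHermitian) :
    algebraMap ℝ _ (⨅ i, hS.eigenvalues i) ≤ S := by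
  rw [algebraMap_le_iff_le_spectrum hS.isSelfAdjoint, hS.spectrum_real_eq_range_eigenvalues]
  rintro _ ⟨i, rfl⟩
  exact ciInf_le (Finite.bddBelow_range _) i

lemma PosDef.iInf_eigenvalues_pos [Nonempty n] {S : Matrix n n 𝕜} (hS : S.PosDef) :
    0 < ⨅ i, hS.isHermitian.eigenvalues i := by
  obtain ⟨i, hi⟩ := exists_eq_ciInf_of_finite (f := hS.isHermitian.eigenvalues)
  exact hi ▸ hS.eigenvalues_pos i

lemma PosDef.inv_mul_mul_inv {M W : Matrix n n 𝕜} (hM : M.PosDef) (hW : W.IsHermitian)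
    (hWu : IsUnit W) : (W⁻¹ * M * W⁻¹).PosDef := by
  have h := hM.conjTranspose_mul_mul_same (B := W⁻¹)
    (mulVec_injective_iff_isUnit.mpr (isUnit_nonsing_inv_iff.mpr hWu))
  rwa [conjTranspose_nonsing_inv, hW.eq] at h

lemma smul_mul_self_le_of_algebraMap_le_inv_mul_mul_inv {M W : Matrix n n 𝕜} {c : ℝ}
    (hW : W.IsHermitian) (hWu : IsUnit W) (h : algebraMap ℝ _ c ≤ W⁻¹ * M * W⁻¹) :
    c • (W * W) ≤ M := by
  have hWdet := (isUnit_iff_isUnit_det W).mp hWu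
  have h' := star_left_conjugate_le_conjugate h W
  rw [star_eq_conjTranspose, hW.eq, Algebra.algebraMap_eq_smul_one] at h'
  convert h' using 1
  · simp
  · rw [← mul_assoc, ← mul_assoc, mul_nonsing_inv W hWdet, one_mul, mul_assoc,
      nonsing_inv_mul W hWdet, mul_one]

end Matrix

/-- Contraction rate from the Riccati identity: with `P ≻ 0`, `M := Q + KᵀRK ≻ 0`
and `(A+BK)ᵀP(A+BK) ≼ P - M`, the number `ρ := 1 - λ_min(P^{-1/2} M P^{-1/2})`
lies in `[0,1)` and gives the one-step contraction
`((A+BK)e)ᵀP((A+BK)e) ≤ ρ · eᵀPe` for all `e`. -/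
theorem contraction_rate {n m : ℕ} (hn : 0 < n)
    (A P Q : Matrix (Fin n) (Fin n) ℝ) (B : Matrix (Fin n) (Fin m) ℝ)
    (K : Matrix (Fin m) (Fin n) ℝ) (R : Matrix (Fin m) (Fin m) ℝ)
    (hP : P.PosDef) (hM : (Q + Kᵀ * R * K).PosDef)
    (hLoewner : ((P - (Q + Kᵀ * R * K)) - (A + B * K)ᵀ * P * (A + B * K)).PosSemidef)
    (S : Matrix (Fin n) (Fin n) ℝ)
    (hSdef : S = (hP.posSemidef.sqrt)⁻¹ * (Q + Kᵀ * R * K) * (hP.posSemidef.sqrt)⁻¹)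
    (hS : S.IsHermitian)
    (ρ : ℝ) (hρ : ρ = 1 - ⨅ i, hS.eigenvalues i) :
    ρ ∈ Set.Ico (0:ℝ) 1 ∧
      ∀ e : Fin n → ℝ,
        ((A + B * K) *ᵥ e) ⬝ᵥ (P *ᵥ ((A + B * K) *ᵥ e)) ≤ ρ * (e ⬝ᵥ (P *ᵥ e)) := by
  set M := Q + Kᵀ * R * K
  set T := A + B * K
  set W := hP.posSemidef.sqrt with hW
  rw [hP.posSemidef.sqrt_eq_cfcSqrt] at hW
  have hWH : W.IsHermitian := hW ▸ (CFC.sqrt_nonneg P).posSemidef.isHermitian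
  have hWu : IsUnit W := hW ▸ (CFC.isUnit_sqrt_iff P hP.posSemidef.nonneg).mpr hP.isUnit
  have hWW : W * W = P := hW ▸ CFC.sqrt_mul_sqrt_self P hP.posSemidef.nonneg
  have : Nonempty (Fin n) := ⟨⟨0, hn⟩⟩
  have hc : 0 < ⨅ i, hS.eigenvalues i := by
    subst hSdef
    exact (hM.inv_mul_mul_inv hWH hWu).iInf_eigenvalues_pos
  have hcP : (⨅ i, hS.eigenvalues i) • P ≤ M := hWW ▸
    smul_mul_self_le_of_algebraMap_le_inv_mul_mul_inv hWH hWu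
      (hSdef ▸ hS.algebraMap_iInf_eigenvalues_le)
  have hTPT : Tᵀ * P * T ≤ ρ • P :=
    calc Tᵀ * P * T ≤ P - M := le_iff.mpr hLoewner
      _ ≤ P - (⨅ i, hS.eigenvalues i) • P := sub_le_sub_left hcP P
      _ = ρ • P := by rw [hρ, sub_smul, one_smul]
  have hρ₀ : 0 ≤ ρ := by
    have hTPT₀ : 0 ≤ Tᵀ * P * T := by
      simpa only [conjTranspose_eq_transpose_of_trivial] using
        (hP.posSemidef.conjTranspose_mul_mul_same T).nonneg
    have h := (hTPT₀.trans hTPT).posSemidef.diag_nonneg (i := ⟨0, hn⟩)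
    rw [Matrix.smul_apply, smul_eq_mul] at h
    exact nonneg_of_mul_nonneg_left h hP.diag_pos
  refine ⟨⟨hρ₀, by linarith⟩, fun e => ?_⟩
  simpa [star_trivial, dotProduct_mulVec_transpose_mul_mul, smul_mulVec, dotProduct_smul] using
    dotProduct_mulVec_le_of_le hTPT e
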